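/- arXiv:1712.03936 — 3 statements merged into one kernel-verified Lean document; each statement's English description precedes it below -/
import Mathlib

section
/- Let R(w) = -1/w - w - (1/q²)(a₂w³ + ⋯ + a_n w^{2n-1}) with real coefficients |a_k| ≤ C. For q sufficiently large, the equation R'(w) = 0 has exactly two solutions in (-3, 3)\{0}, namely ±τ for a unique τ > 0, and moreover τ ∈ (1 - C'/q², 1 + C'/q²) for some constant C' depending on C and n. -/
set_option maxHeartbeats 1000000 in
/-- For `q` sufficiently large, `R'(w) = 0` has exactly two solutions `±τ` in `(-3,3)∖{0}`,
with `τ ∈ (1 - C'/q², 1 + C'/q²)`. -/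
theorem R_critical_points (n : ℕ) (C : ℝ) (hC : 0 < C) (a : ℕ → ℝ)
    (ha : ∀ k, |a k| ≤ C) :
    ∃ C' : ℝ, 0 < C' ∧ ∃ q₀ : ℝ, 0 < q₀ ∧ ∀ q : ℝ, q₀ ≤ q →
      ∃ τ : ℝ, 0 < τ ∧ 1 - C' / q ^ 2 < τ ∧ τ < 1 + C' / q ^ 2 ∧
        ∀ w : ℝ, (w ∈ Set.Ioo (-3 : ℝ) 3 ∧ w ≠ 0 ∧
            1 / w ^ 2 - 1 - (1 / q ^ 2) *
              ∑ k ∈ Finset.Icc 2 n, (((2 * k - 1) : ℕ) : ℝ) * a k * w ^ (2 * k - 2) = 0)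
          ↔ (w = τ ∨ w = -τ) := by
  classical
  set B0 : ℝ := ∑ k ∈ Finset.Icc 2 n, (((2 * k - 1) : ℕ) : ℝ) * C * 3 ^ (2 * k) with hB0def
  set B1 : ℝ := ∑ k ∈ Finset.Icc 2 n,
      (((2 * k) : ℕ) : ℝ) * ((((2 * k - 1) : ℕ) : ℝ) * C * 3 ^ (2 * k)) with hB1def
  have hB0nn : 0 ≤ B0 := Finset.sum_nonneg fun k _ => by positivity
  have hB1nn : 0 ≤ B1 := Finset.sum_nonneg fun k _ => by positivity
  set B : ℝ := B0 + 1 with hBdef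
  have hBpos : 0 < B := by linarith
  refine ⟨B, hBpos, 1 + 2 * B + 2 * B1, by linarith, ?_⟩
  intro q hq
  have hq1 : (1 : ℝ) ≤ q := by linarith
  have hqpos : (0 : ℝ) < q := by linarith
  have hq2pos : (0 : ℝ) < q ^ 2 := by positivity
  have hqq : q ≤ q ^ 2 := by nlinarith
  have h2B : 2 * B ≤ q ^ 2 := by nlinarith
  have h2B1 : 2 * B1 ≤ q ^ 2 := by nlinarith
  have htpos : (0 : ℝ) < 1 / q ^ 2 := by positivity
  set ε : ℝ := B / q ^ 2 with hεdef
  have hεpos : 0 < ε := by positivity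
  have hεhalf : ε ≤ 1 / 2 := by rw [hεdef, div_le_iff₀ hq2pos]; linarith
  have hεt : ε = B0 * (1 / q ^ 2) + 1 / q ^ 2 := by rw [hεdef, hBdef]; ring
  have hε2 : ε ^ 2 ≤ ε / 2 := by nlinarith
  have htB1 : (1 / q ^ 2) * B1 ≤ 1 / 2 := by
    rw [mul_comm, mul_one_div, div_le_iff₀ hq2pos]; linarith
  set h : ℝ → ℝ := fun w => 1 - w ^ 2 - (1 / q ^ 2) *
      ∑ k ∈ Finset.Icc 2 n, (((2 * k - 1) : ℕ) : ℝ) * a k * w ^ (2 * k) with hdef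
  -- bound on the sum
  have habs : ∀ w : ℝ, |w| ≤ 3 →
      |∑ k ∈ Finset.Icc 2 n, (((2 * k - 1) : ℕ) : ℝ) * a k * w ^ (2 * k)| ≤ B0 := by
    intro w hw
    refine (Finset.abs_sum_le_sum_abs _ _).trans (Finset.sum_le_sum ?_)
    intro k _
    rw [abs_mul, abs_mul, abs_pow, Nat.abs_cast]
    gcongr <;> first | exact ha k | exact hw | positivity
  have habs1 : ∀ w : ℝ, |w| ≤ 3 →
      |∑ k ∈ Finset.Icc 2 n, (((2 * k - 1) : ℕ) : ℝ) * a k *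
        ((((2 * k) : ℕ) : ℝ) * w ^ (2 * k - 1))| ≤ B1 := by
    intro w hw
    refine (Finset.abs_sum_le_sum_abs _ _).trans (Finset.sum_le_sum ?_)
    intro k _
    rw [abs_mul, abs_mul, abs_mul, abs_pow, Nat.abs_cast, Nat.abs_cast]
    have h3 : |w| ^ (2 * k - 1) ≤ 3 ^ (2 * k) := by
      calc |w| ^ (2 * k - 1) ≤ 3 ^ (2 * k - 1) :=
            pow_le_pow_left₀ (abs_nonneg w) hw _
        _ ≤ 3 ^ (2 * k) := pow_le_pow_right₀ (by norm_num) (Nat.sub_le _ _)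
    calc (((2 * k - 1) : ℕ) : ℝ) * |a k| * ((((2 * k) : ℕ) : ℝ) * |w| ^ (2 * k - 1))
        ≤ (((2 * k - 1) : ℕ) : ℝ) * C * ((((2 * k) : ℕ) : ℝ) * 3 ^ (2 * k)) := by
          gcongr <;> first | exact ha k | exact h3 | positivity
      _ = (((2 * k) : ℕ) : ℝ) * ((((2 * k - 1) : ℕ) : ℝ) * C * 3 ^ (2 * k)) := by ring
  -- derivative of h
  have hderiv : ∀ w : ℝ, HasDerivAt h
      (-(2 * w) - (1 / q ^ 2) * ∑ k ∈ Finset.Icc 2 n, (((2 * k - 1) : ℕ) : ℝ) * a k *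
        ((((2 * k) : ℕ) : ℝ) * w ^ (2 * k - 1))) w := by
    intro w
    have hS : HasDerivAt (fun w : ℝ => ∑ k ∈ Finset.Icc 2 n,
        (((2 * k - 1) : ℕ) : ℝ) * a k * w ^ (2 * k))
        (∑ k ∈ Finset.Icc 2 n, (((2 * k - 1) : ℕ) : ℝ) * a k *
          ((((2 * k) : ℕ) : ℝ) * w ^ (2 * k - 1))) w := by
      refine HasDerivAt.fun_sum fun k _ => ?_
      simpa [mul_assoc] using
        (hasDerivAt_pow (2 * k) w).const_mul ((((2 * k - 1) : ℕ) : ℝ) * a k)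
    have h1 : HasDerivAt (fun w : ℝ => 1 - w ^ 2) (-(2 * w)) w := by
      simpa using (hasDerivAt_pow 2 w).const_sub 1
    have h2 := h1.sub (hS.const_mul (1 / q ^ 2))
    rw [hdef]
    exact h2
  have hval : ∀ w : ℝ, h w = 1 - w ^ 2 - (1 / q ^ 2) *
      ∑ k ∈ Finset.Icc 2 n, (((2 * k - 1) : ℕ) : ℝ) * a k * w ^ (2 * k) :=
    fun w => by rw [hdef]
  have hcont : Continuous h := by
    rw [continuous_iff_continuousAt]
    exact fun w => (hderiv w).continuousAt
  -- h is even
  have heven : ∀ w : ℝ, h (-w) = h w := by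
    intro w
    have hsum : ∀ k ∈ Finset.Icc 2 n,
        (((2 * k - 1) : ℕ) : ℝ) * a k * (-w) ^ (2 * k)
          = (((2 * k - 1) : ℕ) : ℝ) * a k * w ^ (2 * k) :=
      fun k _ => by rw [Even.neg_pow (even_two_mul k)]
    rw [hval (-w), hval w, Finset.sum_congr rfl hsum, neg_sq]
  set c₁ : ℝ := 1 - ε with hc₁def
  set c₂ : ℝ := 1 + ε with hc₂def
  have hc₁half : (1 : ℝ) / 2 ≤ c₁ := by rw [hc₁def]; linarith
  have hc₂lt : c₂ ≤ 3 / 2 := by rw [hc₂def]; linarith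
  have hc₁c₂ : c₁ < c₂ := by rw [hc₁def, hc₂def]; linarith
  have hc1sq : c₁ ^ 2 = 1 - 2 * ε + ε ^ 2 := by rw [hc₁def]; ring
  have hc2sq : c₂ ^ 2 = 1 + 2 * ε + ε ^ 2 := by rw [hc₂def]; ring
  -- sign of h at the endpoints
  have hhc₁ : 0 < h c₁ := by
    have hb := abs_le.mp (habs c₁ (by rw [abs_of_nonneg (by linarith)]; linarith))
    have hSle := mul_le_mul_of_nonneg_left hb.2 htpos.le
    rw [hval c₁]
    linarith [hSle, hεt, hε2, htpos, hc1sq]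
  have hhc₂ : h c₂ < 0 := by
    have hb := abs_le.mp (habs c₂ (by rw [abs_of_nonneg (by linarith)]; linarith))
    have hSge := mul_le_mul_of_nonneg_left hb.1 htpos.le
    rw [hval c₂]
    linarith [hSge, hεt, hεpos, sq_nonneg ε, htpos, hc2sq]
  -- strict monotonicity on [c₁, c₂]
  have hanti : StrictAntiOn h (Set.Icc c₁ c₂) := by
    apply strictAntiOn_of_deriv_neg (convex_Icc _ _) hcont.continuousOn
    intro w hw
    rw [interior_Icc] at hw
    rw [(hderiv w).deriv]
    have hwpos : 0 < w := lt_of_lt_of_le (by linarith) hw.1.le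
    have hb := abs_le.mp (habs1 w (by rw [abs_of_pos hwpos]; linarith [hw.2.le]))
    have hDge := mul_le_mul_of_nonneg_left hb.1 htpos.le
    linarith [hDge, htB1, hw.1, hc₁half]
  -- existence of the root τ by IVT
  obtain ⟨τ, hτmem, hτ0⟩ :=
    intermediate_value_Icc' hc₁c₂.le hcont.continuousOn ⟨hhc₂.le, hhc₁.le⟩
  have hτgt : c₁ < τ :=
    lt_of_le_of_ne hτmem.1 (by rintro rfl; exact absurd hτ0 (ne_of_gt hhc₁))
  have hτlt : τ < c₂ :=
    lt_of_le_of_ne hτmem.2 (by rintro rfl; exact absurd hτ0 (ne_of_lt hhc₂))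
  have hτpos : 0 < τ := by linarith
  -- uniqueness of the positive root
  have key : ∀ w : ℝ, 0 < w → w < 3 → h w = 0 → w = τ := by
    intro w hw0 hw3 hw
    have hb := abs_le.mp (habs w (by rw [abs_of_pos hw0]; linarith))
    have hSle := mul_le_mul_of_nonneg_left hb.2 htpos.le
    have hSge := mul_le_mul_of_nonneg_left hb.1 htpos.le
    have hwmem : w ∈ Set.Icc c₁ c₂ := by
      constructor
      · by_contra hlt
        push_neg at hlt
        have hww : w ^ 2 < c₁ ^ 2 := pow_lt_pow_left₀ hlt hw0.le two_ne_zero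
        have : 0 < h w := by rw [hval w]; linarith [hSle, hεt, hε2, htpos, hww, hc1sq]
        exact absurd hw (ne_of_gt this)
      · by_contra hlt
        push_neg at hlt
        have hww : c₂ ^ 2 < w ^ 2 := pow_lt_pow_left₀ hlt (by linarith : (0:ℝ) ≤ c₂) two_ne_zero
        have : h w < 0 := by rw [hval w]; linarith [hSge, hεt, hεpos, sq_nonneg ε, htpos, hww, hc2sq]
        exact absurd hw (ne_of_lt this)
    exact hanti.injOn hwmem hτmem (hw.trans hτ0.symm)
  -- relation between h and the original expression
  have hrel : ∀ w : ℝ, w ≠ 0 → h w = w ^ 2 * (1 / w ^ 2 - 1 - (1 / q ^ 2) *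
      ∑ k ∈ Finset.Icc 2 n, (((2 * k - 1) : ℕ) : ℝ) * a k * w ^ (2 * k - 2)) := by
    intro w hw
    have hw2 : w ^ 2 ≠ 0 := pow_ne_zero _ hw
    have hsum : w ^ 2 * ∑ k ∈ Finset.Icc 2 n,
        (((2 * k - 1) : ℕ) : ℝ) * a k * w ^ (2 * k - 2)
        = ∑ k ∈ Finset.Icc 2 n, (((2 * k - 1) : ℕ) : ℝ) * a k * w ^ (2 * k) := by
      rw [Finset.mul_sum]
      refine Finset.sum_congr rfl fun k hk => ?_
      have hk2 : 2 ≤ k := (Finset.mem_Icc.mp hk).1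
      have hpow : w ^ (2 * k) = w ^ 2 * w ^ (2 * k - 2) := by
        rw [← pow_add]; congr 1; omega
      rw [hpow]; ring
    calc h w = 1 - w ^ 2 - (1 / q ^ 2) *
          ∑ k ∈ Finset.Icc 2 n, (((2 * k - 1) : ℕ) : ℝ) * a k * w ^ (2 * k) := hval w
      _ = w ^ 2 * (1 / w ^ 2) - w ^ 2 - (1 / q ^ 2) * (w ^ 2 *
          ∑ k ∈ Finset.Icc 2 n, (((2 * k - 1) : ℕ) : ℝ) * a k * w ^ (2 * k - 2)) := by
          rw [hsum, mul_one_div, div_self hw2]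
      _ = _ := by ring
  refine ⟨τ, hτpos, hτgt, hτlt, ?_⟩
  intro w
  constructor
  · rintro ⟨⟨hw1, hw3⟩, hw0, heq⟩
    have hhw : h w = 0 := by rw [hrel w hw0, heq, mul_zero]
    rcases lt_trichotomy w 0 with hlt | h0 | hgt
    · right
      have hmw : -w = τ := key (-w) (by linarith) (by linarith) (by rw [heven w]; exact hhw)
      linarith
    · exact absurd h0 hw0
    · left; exact key w hgt hw3 hhw
  · have main : ∀ v : ℝ, v ≠ 0 → h v = 0 → 1 / v ^ 2 - 1 - (1 / q ^ 2) *
        ∑ k ∈ Finset.Icc 2 n, (((2 * k - 1) : ℕ) : ℝ) * a k * v ^ (2 * k - 2) = 0 := by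
      intro v hv hv0
      have := (hrel v hv).symm.trans hv0
      rcases mul_eq_zero.mp this with h' | h'
      · exact absurd h' (pow_ne_zero _ hv)
      · exact h'
    rintro (rfl | rfl)
    · exact ⟨⟨by linarith, by linarith⟩, ne_of_gt hτpos, main _ (ne_of_gt hτpos) hτ0⟩
    · refine ⟨⟨by linarith, by linarith⟩, by simp [ne_of_gt hτpos], ?_⟩
      exact main (-τ) (by simp [ne_of_gt hτpos]) (by rw [heven τ]; exact hτ0)
end

section
/- Fix real parameters a, b with |a|, |b| ≤ C, X with |X| ≤ 1/2, and q ≥ q₀(C) sufficiently large. Consider F(m) = -1/m - m - (a/q²)m³ - (b/q⁴)m⁵ - X·m. Then the equation F'(-τ) = 0 has a unique solution τ > 0 near 1, and it satisfies τ = 1 - 3a/(2q²) - 5b/(2q⁴) + 63a²/(8q⁴) - X/2 + O(Xq^{-2} + X² + q^{-6}), i.e., |τ - (1 - 3a/(2q²) - 5b/(2q⁴) + 63a²/(8q⁴) - X/2)| ≤ C''(|X|q^{-2} + X² + q^{-6}) for a constant C'' depending only on C. -/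
set_option maxHeartbeats 1000000 in
/-- Expansion of the unique positive critical point `τ` of
`F(m) = -1/m - m - (a/q²)m³ - (b/q⁴)m⁵ - X·m` near `1`. -/
theorem tau_expansion (C : ℝ) (hC : 0 < C) :
    ∃ C'' : ℝ, 0 < C'' ∧ ∃ q₀ : ℝ, 0 < q₀ ∧
      ∀ a b X q : ℝ, |a| ≤ C → |b| ≤ C → |X| ≤ 1 / 2 → q₀ ≤ q →
        ∃ τ : ℝ,
          (0 < τ ∧ τ ∈ Set.Ioo (1 / 2 : ℝ) (3 / 2) ∧
            1 / τ ^ 2 - 1 - (3 * a / q ^ 2) * τ ^ 2 - (5 * b / q ^ 4) * τ ^ 4 - X = 0 ∧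
            |τ - (1 - 3 * a / (2 * q ^ 2) - 5 * b / (2 * q ^ 4) + 63 * a ^ 2 / (8 * q ^ 4)
              - X / 2)| ≤ C'' * (|X| / q ^ 2 + X ^ 2 + 1 / q ^ 6)) ∧
          ∀ τ' : ℝ, (0 < τ' ∧ τ' ∈ Set.Ioo (1 / 2 : ℝ) (3 / 2) ∧
            1 / τ' ^ 2 - 1 - (3 * a / q ^ 2) * τ' ^ 2 - (5 * b / q ^ 4) * τ' ^ 4 - X = 0)
            → τ' = τ := by
  obtain ⟨c₁, hc₁⟩ : ∃ c : ℝ, c = 4 * C + 8 * C ^ 2 := ⟨_, rfl⟩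
  obtain ⟨K, hK⟩ : ∃ k : ℝ, k = 1 + 110 * C + c₁ + 3 * c₁ ^ 2 + 39 * C * c₁ + 354 * C * c₁ ^ 2 :=
    ⟨_, rfl⟩
  have hc₁pos : 0 < c₁ := by rw [hc₁]; positivity
  have hc₁sq : (0:ℝ) ≤ c₁ ^ 2 := sq_nonneg c₁
  have hCc₁ : 0 < C * c₁ := mul_pos hC hc₁pos
  have hCc₁sq : 0 < C * c₁ ^ 2 := by positivity
  have hKpos : 0 < K := by rw [hK]; linarith only [hC, hc₁pos, hc₁sq, hCc₁, hCc₁sq]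
  refine ⟨4 * K, by positivity, 8 * (1 + 300 * C + c₁), by positivity, ?_⟩
  intro a b X q ha hb hX hq
  have hq8 : (8 : ℝ) ≤ q := by linarith only [hq, hC, hc₁pos]
  have hqpos : (0 : ℝ) < q := by linarith only [hq8]
  have hq2pos : (0 : ℝ) < q ^ 2 := by positivity
  obtain ⟨u, hu⟩ : ∃ u : ℝ, u = 1 / q ^ 2 := ⟨_, rfl⟩
  have hupos : 0 < u := by rw [hu]; positivity
  have huq : u * q ^ 2 = 1 := by rw [hu]; field_simp
  have hu1 : u ≤ 1 / 64 := by
    linarith only [huq, mul_nonneg (sub_nonneg.mpr hq8) (mul_nonneg hqpos.le hupos.le),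
      mul_nonneg (sub_nonneg.mpr hq8) hupos.le]
  have hu1' : u ≤ 1 := by linarith only [hu1]
  have hCq : 2400 * C ≤ q := by linarith only [hq, hc₁pos]
  have hCu : C * u ≤ 1 / 19200 := by
    linarith only [huq, mul_nonneg (sub_nonneg.mpr hq8) (mul_nonneg hqpos.le hupos.le),
      mul_nonneg (sub_nonneg.mpr hCq) hupos.le]
  have hc₁q : 8 * c₁ ≤ q := by linarith only [hq, hC]
  have hc₁u : c₁ * u ≤ 1 / 64 := by
    linarith only [huq, mul_nonneg (sub_nonneg.mpr hq8) (mul_nonneg hqpos.le hupos.le),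
      mul_nonneg (sub_nonneg.mpr hc₁q) hupos.le]
  obtain ⟨p, hp⟩ : ∃ p : ℝ, p = a / q ^ 2 := ⟨_, rfl⟩
  obtain ⟨r, hr⟩ : ∃ r : ℝ, r = b / q ^ 4 := ⟨_, rfl⟩
  have habs_p : |p| ≤ C * u := by
    rw [hp, hu, abs_div, abs_of_pos hq2pos, div_le_iff₀ hq2pos]
    calc |a| ≤ C := ha
    _ = C * (1 / q ^ 2) * q ^ 2 := by field_simp
  have habs_r : |r| ≤ C * u ^ 2 := by
    have hq4 : (0:ℝ) < q ^ 4 := by positivity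
    rw [hr, hu, abs_div, abs_of_pos hq4, div_le_iff₀ hq4]
    have hq44 : (1 / q ^ 2) ^ 2 * q ^ 4 = 1 := by
      field_simp
    calc |b| ≤ C := hb
    _ = C * ((1 / q ^ 2) ^ 2 * q ^ 4) := by rw [hq44, mul_one]
    _ = C * (1 / q ^ 2) ^ 2 * q ^ 4 := by ring
  have hX' := abs_le.mp hX
  have hp' := abs_le.mp habs_p
  have hr' := abs_le.mp habs_r
  have hru : C * u ^ 2 ≤ C * u := by
    linarith only [mul_nonneg (mul_nonneg hC.le hupos.le) (sub_nonneg.mpr hu1')]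
  have hp_small : -(1/19200 : ℝ) ≤ p ∧ p ≤ 1/19200 :=
    ⟨by linarith only [hp'.1, hCu], by linarith only [hp'.2, hCu]⟩
  have hr_small : -(1/19200 : ℝ) ≤ r ∧ r ≤ 1/19200 :=
    ⟨by linarith only [hr'.1, hru, hCu], by linarith only [hr'.2, hru, hCu]⟩
  -- the polynomial h
  obtain ⟨f, hf⟩ : ∃ f : ℝ → ℝ, f = fun t : ℝ => 1 - (1+X)*t^2 - 3*p*t^4 - 5*r*t^6 := ⟨_, rfl⟩
  have hfval : ∀ t : ℝ, f t = 1 - (1+X)*t^2 - 3*p*t^4 - 5*r*t^6 := fun t => by rw [hf]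
  -- monotonicity with quantitative slope
  have hmono : ∀ s t : ℝ, 1/2 ≤ s → s ≤ t → t ≤ 3/2 → f t + (1/4)*(t-s) ≤ f s := by
    intro s t hs hst ht
    rw [hfval, hfval]
    have hs0 : (0:ℝ) ≤ s := by linarith only [hs]
    have ht0 : (0:ℝ) ≤ t := by linarith only [hs, hst]
    have hs32 : s ≤ 3/2 := le_trans hst ht
    have htt3 : t^3 ≤ 27/8 := by
      have h := pow_le_pow_left₀ ht0 ht 3
      norm_num at h
      linarith only [h]
    have htt5 : t^5 ≤ 243/32 := by
      have h := pow_le_pow_left₀ ht0 ht 5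
      norm_num at h
      linarith only [h]
    have hpow : ∀ k : ℕ, s ^ k ≤ t ^ k := fun k => pow_le_pow_left₀ hs0 hst k
    have hS4 : 0 ≤ t^3+t^2*s+t*s^2+s^3 ∧ t^3+t^2*s+t*s^2+s^3 ≤ 14 := by
      constructor
      · linarith only [pow_nonneg ht0 3, pow_nonneg hs0 3,
          mul_nonneg (mul_nonneg ht0 ht0) hs0, mul_nonneg ht0 (mul_nonneg hs0 hs0)]
      · have h1 : t^2*s ≤ t^2*t := mul_le_mul_of_nonneg_left hst (by positivity)
        have h2 : t*s^2 ≤ t*t^2 := mul_le_mul_of_nonneg_left (hpow 2) ht0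
        have h3 : s^3 ≤ t^3 := hpow 3
        linarith only [htt3, h1, h2, h3]
    have hS6 : 0 ≤ t^5+t^4*s+t^3*s^2+t^2*s^3+t*s^4+s^5 ∧
        t^5+t^4*s+t^3*s^2+t^2*s^3+t*s^4+s^5 ≤ 46 := by
      constructor
      · linarith only [pow_nonneg ht0 5, pow_nonneg hs0 5,
          mul_nonneg (pow_nonneg ht0 4) hs0, mul_nonneg (pow_nonneg ht0 3) (pow_nonneg hs0 2),
          mul_nonneg (pow_nonneg ht0 2) (pow_nonneg hs0 3), mul_nonneg ht0 (pow_nonneg hs0 4)]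
      · have h1 : t^4*s ≤ t^4*t := mul_le_mul_of_nonneg_left hst (by positivity)
        have h2 : t^3*s^2 ≤ t^3*t^2 := mul_le_mul_of_nonneg_left (hpow 2) (by positivity)
        have h3 : t^2*s^3 ≤ t^2*t^3 := mul_le_mul_of_nonneg_left (hpow 3) (by positivity)
        have h4 : t*s^4 ≤ t*t^4 := mul_le_mul_of_nonneg_left (hpow 4) ht0
        have h5 : s^5 ≤ t^5 := hpow 5
        linarith only [htt5, h1, h2, h3, h4, h5]
    have hbr : (1/4:ℝ) ≤ (1+X)*(t+s) + 3*p*(t^3+t^2*s+t*s^2+s^3)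
        + 5*r*(t^5+t^4*s+t^3*s^2+t^2*s^3+t*s^4+s^5) := by
      have h1 : -(1/19200:ℝ)*(t^3+t^2*s+t*s^2+s^3) ≤ p*(t^3+t^2*s+t*s^2+s^3) :=
        mul_le_mul_of_nonneg_right hp_small.1 hS4.1
      have h2 : -(1/19200:ℝ)*(t^5+t^4*s+t^3*s^2+t^2*s^3+t*s^4+s^5) ≤
          r*(t^5+t^4*s+t^3*s^2+t^2*s^3+t*s^4+s^5) :=
        mul_le_mul_of_nonneg_right hr_small.1 hS6.1
      have hmul : (1/2:ℝ)*(t+s) ≤ (1+X)*(t+s) :=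
        mul_le_mul_of_nonneg_right (by linarith only [hX'.1]) (by linarith only [hs, hst])
      linarith only [h1, h2, hS4.2, hS6.2, hmul, hs, hst]
    have hts : (0:ℝ) ≤ t - s := by linarith only [hst]
    linarith only [mul_le_mul_of_nonneg_left hbr hts]
  -- endpoint values
  have hf12 : 0 < f (1/2) := by
    rw [hfval]
    have hX2 := hX'.2
    have h1 := hp_small.1
    have h1' := hp_small.2
    have h2 := hr_small.1
    have h2' := hr_small.2
    norm_num
    linarith only [hX2, h1, h1', h2, h2']
  have hf32 : f (3/2) < 0 := by
    rw [hfval]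
    have hX1 := hX'.1
    have h1 := hp_small.1
    have h1' := hp_small.2
    have h2 := hr_small.1
    have h2' := hr_small.2
    norm_num
    linarith only [hX1, h1, h1', h2, h2']
  -- IVT
  have hcont : ContinuousOn f (Set.Icc (1/2 : ℝ) (3/2)) := by
    rw [hf]; fun_prop
  obtain ⟨τ, hτmem, hτeq⟩ := intermediate_value_Icc' (by norm_num : (1/2:ℝ) ≤ 3/2) hcont
    (Set.mem_Icc.mpr ⟨hf32.le, hf12.le⟩)
  have hτeq : f τ = 0 := hτeq
  have hτIoo : τ ∈ Set.Ioo (1/2 : ℝ) (3/2) := by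
    rcases hτmem with ⟨h1, h2⟩
    constructor
    · rcases eq_or_lt_of_le h1 with h | h
      · exfalso; rw [← h] at hτeq; linarith only [hτeq, hf12]
      · exact h
    · rcases eq_or_lt_of_le h2 with h | h
      · exfalso; rw [h] at hτeq; linarith only [hτeq, hf32]
      · exact h
  have hτpos : 0 < τ := by linarith only [hτIoo.1]
  have hτne : τ ≠ 0 := ne_of_gt hτpos
  -- the equation
  have heqn : 1 / τ ^ 2 - 1 - (3 * a / q ^ 2) * τ ^ 2 - (5 * b / q ^ 4) * τ ^ 4 - X = 0 := by
    have h2 : 1 / τ ^ 2 - 1 - (3 * a / q ^ 2) * τ ^ 2 - (5 * b / q ^ 4) * τ ^ 4 - X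
        = (f τ) / τ ^ 2 := by
      rw [hfval, hp, hr]
      field_simp
      ring
    rw [h2, hτeq, zero_div]
  -- uniqueness
  have huniq : ∀ τ' : ℝ, (0 < τ' ∧ τ' ∈ Set.Ioo (1 / 2 : ℝ) (3 / 2) ∧
      1 / τ' ^ 2 - 1 - (3 * a / q ^ 2) * τ' ^ 2 - (5 * b / q ^ 4) * τ' ^ 4 - X = 0) → τ' = τ := by
    rintro τ' ⟨hτ'pos, hτ'Ioo, heq'⟩
    have hτ'ne : τ' ≠ 0 := ne_of_gt hτ'pos
    have hfτ' : f τ' = 0 := by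
      have h2 : f τ' = τ' ^ 2 *
          (1 / τ' ^ 2 - 1 - (3 * a / q ^ 2) * τ' ^ 2 - (5 * b / q ^ 4) * τ' ^ 4 - X) := by
        rw [hfval, hp, hr]
        field_simp
        ring
      rw [h2, heq', mul_zero]
    rcases lt_trichotomy τ' τ with h | h | h
    · exfalso
      have := hmono τ' τ hτ'Ioo.1.le h.le hτIoo.2.le
      rw [hτeq, hfτ'] at this; linarith only [this, h]
    · exact h
    · exfalso
      have := hmono τ τ' hτIoo.1.le h.le hτ'Ioo.2.le
      rw [hτeq, hfτ'] at this; linarith only [this, h]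
  -- expansion quantities
  obtain ⟨A, hA⟩ : ∃ A : ℝ, A = (3/2)*p + (5/2)*r - (63/8)*p^2 := ⟨_, rfl⟩
  obtain ⟨B, hB⟩ : ∃ B : ℝ, B = (5/2)*r - (63/8)*p^2 := ⟨_, rfl⟩
  obtain ⟨δ, hδ⟩ : ∃ d : ℝ, d = X/2 + A := ⟨_, rfl⟩
  have hp2 : p ^ 2 ≤ (C*u) ^ 2 := sq_le_sq' hp'.1 hp'.2
  have hC2u : (0:ℝ) ≤ C^2*u*(1-u) := by
    have : (0:ℝ) ≤ 1 - u := by linarith only [hu1']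
    positivity
  have hc₁u_eq : c₁ * u = 4*(C*u) + 8*(C^2*u) := by rw [hc₁]; ring
  have hc₁u2_eq : c₁ * u^2 = 4*(C*u^2) + 8*(C^2*u^2) := by rw [hc₁]; ring
  have habs_A : |A| ≤ c₁ * u := by
    rw [hA, abs_le]
    constructor
    · linarith only [hc₁u_eq, hp'.1, hr'.1, hp2, sq_nonneg p, hru, hC2u,
        mul_nonneg (mul_nonneg hC.le hC.le) hupos.le,
        mul_nonneg (mul_nonneg hC.le hupos.le) (sub_nonneg.mpr hu1')]
    · linarith only [hc₁u_eq, hp'.2, hr'.2, hp2, sq_nonneg p, hru, hC2u,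
        mul_nonneg (mul_nonneg hC.le hC.le) hupos.le,
        mul_nonneg (mul_nonneg hC.le hupos.le) (sub_nonneg.mpr hu1')]
  have habs_B : |B| ≤ c₁ * u ^ 2 := by
    rw [hB, abs_le]
    have hC2u2 : (0:ℝ) ≤ C^2*u^2*(1-u^2) := by
      have h1 : (0:ℝ) ≤ 1 - u^2 := by nlinarith only [hupos.le, hu1']
      positivity
    constructor
    · linarith only [hc₁u2_eq, hr'.1, hp2, sq_nonneg p, hC2u2,
        mul_nonneg (mul_nonneg hC.le hC.le) (sq_nonneg u), mul_nonneg hC.le (sq_nonneg u)]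
    · linarith only [hc₁u2_eq, hr'.2, hp2, sq_nonneg p, hC2u2,
        mul_nonneg (mul_nonneg hC.le hC.le) (sq_nonneg u), mul_nonneg hC.le (sq_nonneg u)]
  have hA' := abs_le.mp habs_A
  have hB' := abs_le.mp habs_B
  have habs_δ : |δ| ≤ |X|/2 + c₁ * u := by
    rw [hδ]
    calc |X/2 + A| ≤ |X/2| + |A| := abs_add_le _ _
    _ = |X|/2 + |A| := by rw [abs_div]; norm_num
    _ ≤ |X|/2 + c₁ * u := by linarith only [habs_A]
  have hδ' := abs_le.mp habs_δ
  have hδhalf : |δ| ≤ 1/2 := by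
    calc |δ| ≤ |X|/2 + c₁*u := habs_δ
    _ ≤ 1/4 + 1/64 := by linarith only [hX, hc₁u]
    _ ≤ 1/2 := by norm_num
  have hδh' := abs_le.mp hδhalf
  have hδsq : δ^2 ≤ X^2/2 + 2*(c₁*u)^2 := by
    rw [hδ]
    linarith only [sq_nonneg (X/2 - A), sq_le_sq' hA'.1 hA'.2]
  obtain ⟨τ₀, hτ₀⟩ : ∃ t : ℝ, t = 1 - δ := ⟨_, rfl⟩
  have hτ₀mem : 1/2 ≤ τ₀ ∧ τ₀ ≤ 3/2 := by
    rw [hτ₀]; exact ⟨by linarith only [hδh'.2], by linarith only [hδh'.1]⟩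
  -- key identity
  have hid : f τ₀ = 6*p*X + (3/4)*X^2 + X*A - X*δ^2 + 9*p*B - B^2 + 30*r*δ
      - 3*p*δ^2*(6 - 4*δ + δ^2) - 5*r*δ^2*(15 - 20*δ + 15*δ^2 - 6*δ^3 + δ^4) := by
    rw [hfval, hτ₀, hδ, hA, hB]
    ring
  -- per-term bounds
  have hXnn : (0:ℝ) ≤ |X| := abs_nonneg X
  have huXnn : (0:ℝ) ≤ u * |X| := mul_nonneg hupos.le hXnn
  have huuX : (0:ℝ) ≤ (1-u)*(u*|X|) := mul_nonneg (by linarith) huXnn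
  have e1 : |6*p*X| ≤ 6*C*(u*|X|) := by
    rw [show (6:ℝ)*p*X = 6*(p*X) by ring, abs_mul, abs_mul,
      show |(6:ℝ)| = 6 by norm_num]
    linarith only [mul_le_mul_of_nonneg_right habs_p hXnn]
  have e3 : |X*A| ≤ c₁*(u*|X|) := by
    rw [abs_mul]
    linarith only [mul_le_mul_of_nonneg_left habs_A hXnn]
  have e4 : |X*δ^2| ≤ (1/4)*X^2 + 2*c₁^2*(u*|X|) := by
    rw [abs_mul, abs_of_nonneg (sq_nonneg δ)]
    linarith only [mul_le_mul_of_nonneg_left hδsq hXnn,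
      mul_nonneg (sub_nonneg.mpr hX) (sq_nonneg X),
      mul_nonneg hc₁sq huuX]
  have e5 : |9*p*B| ≤ 9*C*c₁*u^3 := by
    rw [show (9:ℝ)*p*B = 9*(p*B) by ring, abs_mul, abs_mul,
      show |(9:ℝ)| = 9 by norm_num]
    have h1 : |p| * |B| ≤ (C*u) * (c₁*u^2) :=
      mul_le_mul habs_p habs_B (abs_nonneg B) (by positivity)
    linarith only [h1]
  have e6 : |B^2| ≤ c₁^2*u^3 := by
    rw [abs_of_nonneg (sq_nonneg B)]
    have h1 : B^2 ≤ (c₁*u^2)^2 := sq_le_sq' hB'.1 hB'.2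
    have h2 : (0:ℝ) ≤ c₁^2*u^3*(1-u) := by
      have : (0:ℝ) ≤ 1 - u := by linarith only [hu1']
      positivity
    linarith only [h1, h2]
  have e7 : |30*r*δ| ≤ 15*C*(u*|X|) + 30*C*c₁*u^3 := by
    rw [show (30:ℝ)*r*δ = 30*(r*δ) by ring, abs_mul, abs_mul,
      show |(30:ℝ)| = 30 by norm_num]
    have h1 : |r| * |δ| ≤ (C*u^2) * (|X|/2 + c₁*u) :=
      mul_le_mul habs_r habs_δ (abs_nonneg δ) (by positivity)
    linarith only [h1, mul_nonneg hC.le huuX]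
  have hδ2 : δ^2 ≤ 1/4 := by
    have h := sq_le_sq' hδh'.1 hδh'.2
    norm_num at h
    linarith only [h]
  have hs4 : |6 - 4*δ + δ^2| ≤ 9 := by
    rw [abs_le]
    exact ⟨by linarith only [hδh'.1, hδh'.2, sq_nonneg δ], by linarith only [hδh'.1, hδ2]⟩
  have hδ3 : |δ^3| ≤ 1/8 := by
    rw [abs_pow]
    calc |δ|^3 ≤ (1/2)^3 := pow_le_pow_left₀ (abs_nonneg δ) hδhalf 3
    _ = 1/8 := by norm_num
  have hδ4 : δ^4 ≤ 1/16 := by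
    have h1 : (δ^2)^2 ≤ (1/4)^2 := sq_le_sq' (by linarith only [sq_nonneg δ]) hδ2
    calc δ^4 = (δ^2)^2 := by ring
    _ ≤ (1/4)^2 := h1
    _ ≤ 1/16 := by norm_num
  have hδ3' := abs_le.mp hδ3
  have hs6 : |15 - 20*δ + 15*δ^2 - 6*δ^3 + δ^4| ≤ 30 := by
    rw [abs_le]
    constructor
    · linarith only [hδh'.1, hδh'.2, sq_nonneg δ, hδ2, hδ3'.1, hδ3'.2, hδ4, sq_nonneg (δ^2)]
    · linarith only [hδh'.1, hδh'.2, sq_nonneg δ, hδ2, hδ3'.1, hδ3'.2, hδ4, sq_nonneg (δ^2)]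
  have e8 : |3*p*δ^2*(6 - 4*δ + δ^2)| ≤ (27/2)*C*X^2 + 54*C*c₁^2*u^3 := by
    have h0 : |3*p*δ^2*(6 - 4*δ + δ^2)| = 3 * |p| * δ^2 * |6 - 4*δ + δ^2| := by
      rw [show (3:ℝ)*p*δ^2*(6 - 4*δ + δ^2) = (3*(p*(δ^2*(6 - 4*δ + δ^2)))) by ring,
        abs_mul, abs_mul, abs_mul, abs_of_nonneg (sq_nonneg δ),
        show |(3:ℝ)| = 3 by norm_num]
      ring
    rw [h0]
    have h1 : 3 * |p| * δ^2 * |6 - 4*δ + δ^2| ≤ 3*(C*u)*δ^2*9 := by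
      have hm := mul_le_mul_of_nonneg_left
        (mul_le_mul habs_p hs4 (abs_nonneg _) (by positivity))
        (by positivity : (0:ℝ) ≤ 3*δ^2)
      linarith only [hm]
    have h2 : (C*u)*δ^2 ≤ (C*u)*(X^2/2 + 2*(c₁*u)^2) :=
      mul_le_mul_of_nonneg_left hδsq (by positivity)
    have h3 : (0:ℝ) ≤ (1-u)*C*X^2 := by
      have : (0:ℝ) ≤ 1 - u := by linarith only [hu1']
      positivity
    linarith only [h1, h2, h3]
  have e9 : |5*r*δ^2*(15 - 20*δ + 15*δ^2 - 6*δ^3 + δ^4)| ≤ 75*C*X^2 + 300*C*c₁^2*u^3 := by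
    have h0 : |5*r*δ^2*(15 - 20*δ + 15*δ^2 - 6*δ^3 + δ^4)|
        = 5 * |r| * δ^2 * |15 - 20*δ + 15*δ^2 - 6*δ^3 + δ^4| := by
      rw [show (5:ℝ)*r*δ^2*(15 - 20*δ + 15*δ^2 - 6*δ^3 + δ^4)
          = (5*(r*(δ^2*(15 - 20*δ + 15*δ^2 - 6*δ^3 + δ^4)))) by ring,
        abs_mul, abs_mul, abs_mul, abs_of_nonneg (sq_nonneg δ),
        show |(5:ℝ)| = 5 by norm_num]
      ring
    rw [h0]
    have h1 : 5 * |r| * δ^2 * |15 - 20*δ + 15*δ^2 - 6*δ^3 + δ^4| ≤ 5*(C*u^2)*δ^2*30 := by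
      have hm := mul_le_mul_of_nonneg_left
        (mul_le_mul habs_r hs6 (abs_nonneg _) (by positivity))
        (by positivity : (0:ℝ) ≤ 5*δ^2)
      linarith only [hm]
    have h2 : (C*u^2)*δ^2 ≤ (C*u^2)*(X^2/2 + 2*(c₁*u)^2) :=
      mul_le_mul_of_nonneg_left hδsq (by positivity)
    have h3 : (0:ℝ) ≤ (1-u^2)*C*X^2 := by
      have : (0:ℝ) ≤ 1 - u^2 := by nlinarith only [hupos.le, hu1']
      positivity
    have h4 : (0:ℝ) ≤ C*c₁^2*u^3*(1-u) := by
      have : (0:ℝ) ≤ 1 - u := by linarith only [hu1']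
      positivity
    linarith only [h1, h2, h3, h4]
  -- combine
  have k1 : 21*C + c₁ + 2*c₁^2 ≤ K := by rw [hK]; linarith only [hC, hc₁pos, hc₁sq, hCc₁, hCc₁sq]
  have k2 : 1 + 177*C/2 ≤ K := by rw [hK]; linarith only [hC, hc₁pos, hc₁sq, hCc₁, hCc₁sq]
  have k3 : 39*C*c₁ + c₁^2 + 354*C*c₁^2 ≤ K := by rw [hK]; linarith only [hC, hc₁pos, hc₁sq, hCc₁, hCc₁sq]
  have kb1 : (21*C + c₁ + 2*c₁^2)*(u*|X|) ≤ K*(u*|X|) :=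
    mul_le_mul_of_nonneg_right k1 huXnn
  have kb2 : (1 + 177*C/2)*X^2 ≤ K*X^2 := mul_le_mul_of_nonneg_right k2 (sq_nonneg X)
  have kb3 : (39*C*c₁ + c₁^2 + 354*C*c₁^2)*u^3 ≤ K*u^3 :=
    mul_le_mul_of_nonneg_right k3 (by positivity)
  have hfτ₀ : |f τ₀| ≤ K*(u*|X| + X^2 + u^3) := by
    rw [hid, abs_le]
    have b1 := abs_le.mp e1
    have b3 := abs_le.mp e3
    have b4 := abs_le.mp e4
    have b5 := abs_le.mp e5
    have b6 := abs_le.mp e6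
    have b7 := abs_le.mp e7
    have b8 := abs_le.mp e8
    have b9 := abs_le.mp e9
    constructor
    · linarith only [b1.1, b3.1, b4.1, b5.1, b6.1, b7.1, b8.1, b9.1, b4.2, b6.2, b8.2, b9.2,
        kb1, kb2, kb3, sq_nonneg X, huXnn, pow_nonneg hupos.le 3]
    · linarith only [b1.2, b3.2, b4.2, b5.2, b6.2, b7.2, b8.2, b9.2, b4.1, b6.1, b8.1, b9.1,
        kb1, kb2, kb3, sq_nonneg X, huXnn, pow_nonneg hupos.le 3]
  -- Lipschitz-type bound from monotonicity
  have hdist : |τ - τ₀| ≤ 4*|f τ₀| := by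
    rcases le_total τ τ₀ with h | h
    · have hm := hmono τ τ₀ hτIoo.1.le h hτ₀mem.2
      rw [hτeq] at hm
      rw [abs_sub_comm, abs_of_nonneg (by linarith only [h])]
      have := neg_abs_le (f τ₀)
      linarith only [hm, this]
    · have hm := hmono τ₀ τ hτ₀mem.1 h hτIoo.2.le
      rw [hτeq] at hm
      rw [abs_of_nonneg (by linarith only [h])]
      have := le_abs_self (f τ₀)
      linarith only [hm, this]
  -- final bound
  have hcen : 1 - 3 * a / (2 * q ^ 2) - 5 * b / (2 * q ^ 4) + 63 * a ^ 2 / (8 * q ^ 4)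
      - X / 2 = τ₀ := by
    rw [hτ₀, hδ, hA, hp, hr]
    field_simp
    ring
  have hE : |X| / q ^ 2 + X ^ 2 + 1 / q ^ 6 = u*|X| + X^2 + u^3 := by
    rw [hu]; ring
  refine ⟨τ, ⟨hτpos, hτIoo, heqn, ?_⟩, huniq⟩
  rw [hcen, hE]
  calc |τ - τ₀| ≤ 4*|f τ₀| := hdist
  _ ≤ 4*(K*(u*|X| + X^2 + u^3)) := by linarith only [hfτ₀]
  _ = 4*K*(u*|X| + X^2 + u^3) := by ring
end

section
/- With F, τ as in the previous setting (F(m) = -1/m - m - (a/q²)m³ - (b/q⁴)m⁵ - X·m, F'(-τ) = 0, τ > 0 near 1, |a|,|b| ≤ C, |X| ≤ 1/2, q large), the value L̃ = F(-τ) satisfies L̃ = 2 + a/q² + b/q⁴ - 9a²/(4q⁴) + X + O(Xq^{-2} + X² + q^{-6}). -/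
set_option maxHeartbeats 1000000

private lemma absmul {x y c d : ℝ} (hx : |x| ≤ c) (hy : |y| ≤ d) : |x*y| ≤ c*d := by
  rw [abs_mul]; exact mul_le_mul hx hy (abs_nonneg _) ((abs_nonneg _).trans hx)

private lemma edge_arith (C x p e : ℝ) (hC : 0 < C) (hx0 : 0 ≤ x)
    (hp0 : 0 < p) (hp1 : p ≤ 1) (he0 : 0 ≤ e) (he : e ≤ x + 33*C*p) :
    9/4*e^2*(29*C*p) + ((x+26*C*p^2)*(x+40*C*p) + 120*C^2*p^2*e)
      ≤ 100000*(1+C)^3*(x*p + x^2 + p^3) := by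
  have he2 : e^2 ≤ x^2 + 66*C*p*x + 1089*C^2*p^2 := by
    nlinarith only [mul_le_mul he he he0 (by positivity : (0:ℝ) ≤ x + 33*C*p)]
  have hT1 : 9/4*e^2*(29*C*p) ≤ 66*C*x^2 + 4307*C^2*(p*x) + 71059*C^3*p^3 := by
    linarith only [mul_le_mul_of_nonneg_left he2 (by positivity : (0:ℝ) ≤ C*p),
      mul_nonneg (mul_nonneg hC.le (sq_nonneg x)) (by linarith : (0:ℝ) ≤ 1-p),
      mul_nonneg (mul_nonneg (mul_nonneg (sq_nonneg C) hx0) hp0.le) (by linarith : (0:ℝ) ≤ 1-p),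
      mul_nonneg hC.le (sq_nonneg x),
      mul_nonneg (mul_nonneg (sq_nonneg C) hp0.le) hx0,
      mul_nonneg (pow_nonneg hC.le 3) (pow_nonneg hp0.le 3)]
  have hT2 : (x+26*C*p^2)*(x+40*C*p) ≤ x^2 + 66*C*(p*x) + 1040*C^2*p^3 := by
    nlinarith only [mul_nonneg (mul_nonneg (mul_nonneg hC.le hx0) hp0.le) (by linarith : (0:ℝ) ≤ 1-p)]
  have hT3 : 120*C^2*p^2*e ≤ 120*C^2*(p*x) + 3960*C^3*p^3 := by
    linarith only [mul_le_mul_of_nonneg_left he (by positivity : (0:ℝ) ≤ 120*C^2*p^2),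
      mul_nonneg (mul_nonneg (mul_nonneg (sq_nonneg C) hx0) hp0.le) (by linarith : (0:ℝ) ≤ 1-p)]
  have hcube : (0:ℝ) ≤ C^3 := by positivity
  have hK1 : 1 + 66*C ≤ 100000*(1+C)^3 := by
    linarith only [hC.le, sq_nonneg C, hcube]
  have hK2 : 66*C + 4427*C^2 ≤ 100000*(1+C)^3 := by
    linarith only [hC.le, sq_nonneg C, hcube]
  have hK3 : 75019*C^3 + 1040*C^2 ≤ 100000*(1+C)^3 := by
    linarith only [hC.le, sq_nonneg C, hcube]
  have hpx : 0 ≤ p*x := mul_nonneg hp0.le hx0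
  have hp3 : (0:ℝ) ≤ p^3 := by positivity
  linarith only [hT1, hT2, hT3,
    mul_le_mul_of_nonneg_right hK1 (sq_nonneg x),
    mul_le_mul_of_nonneg_right hK2 hpx,
    mul_le_mul_of_nonneg_right hK3 hp3]

private lemma edge_main (C : ℝ) (hC : 0 < C) (a b X p τ : ℝ)
    (ha : |a| ≤ C) (hb : |b| ≤ C) (hX : |X| ≤ 1/2) (hp0 : 0 < p) (hp1 : p ≤ 1)
    (hτ : τ ∈ Set.Ioo (1/2 : ℝ) (3/2))
    (heq : 1/τ^2 - 1 - 3*a*p*τ^2 - 5*b*p^2*τ^4 - X = 0) :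
    |(1/τ + τ + a*p*τ^3 + b*p^2*τ^5 + X*τ) - (2 + a*p + b*p^2 - 9*a^2*p^2/4 + X)| ≤
      100000*(1+C)^3*(|X| * p + X^2 + p^3) := by
  obtain ⟨hτl, hτr⟩ := hτ
  have hτ0 : τ ≠ 0 := by intro h; rw [h] at hτl; linarith
  have hτ1 : τ + 1 ≠ 0 := by intro h; linarith
  have hτpos : 0 < τ := by linarith
  have hτ2 : τ^2 ≤ 9/4 := by nlinarith only [hτl, hτr]
  have hτ3 : τ^3 ≤ 27/8 := by nlinarith only [hτr, hτ2, sq_nonneg τ]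
  have hτ4 : τ^4 ≤ 81/16 := by nlinarith only [hτ2, sq_nonneg τ]
  have hτ5 : τ^5 ≤ 243/32 := by
    nlinarith only [hτ2, hτ3, pow_nonneg hτpos.le 3]
  have ha2 : a^2 ≤ C^2 := by nlinarith only [sq_abs a, abs_nonneg a, ha, hC.le]
  set E : ℝ := X + 3*a*p*τ^2 + 5*b*p^2*τ^4 with hEdef
  have hX' : X = 1/τ^2 - 1 - 3*a*p*τ^2 - 5*b*p^2*τ^4 := by linarith
  have h1 : (τ-1)*(τ+1) = -(E*τ^2) := by
    have h : 1/τ^2 = 1 + E := by rw [hEdef]; linarith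
    field_simp at h
    linear_combination -h
  clear heq
  have habs : |τ-1| ≤ 3/2 * |E| := by
    have habs0 : |τ-1| * (τ+1) = |E| * τ^2 := by
      have h2 := congrArg abs h1
      rwa [abs_mul, abs_neg, abs_mul, abs_of_pos (by linarith : (0:ℝ) < τ+1),
        abs_of_nonneg (sq_nonneg τ)] at h2
    nlinarith only [habs0, hτ2, abs_nonneg E, abs_nonneg (τ-1), hτl,
      mul_nonneg (abs_nonneg (τ-1)) (by linarith : (0:ℝ) ≤ τ - 1/2)]
  have hCp0 : (0:ℝ) ≤ C*p := mul_nonneg hC.le hp0.le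
  have hCpp : (0:ℝ) ≤ C*p*(1-p) := mul_nonneg hCp0 (by linarith)
  have hCp : 26*C*p^2 ≤ 26*C*p := by linarith only [hCpp]
  have h3a : |3*a*p*τ^2| ≤ 27/4*C*p := by
    have e1 : (3:ℝ)*a*p*τ^2 = a*(3*p*τ^2) := by ring
    have e2 : |3*p*τ^2| ≤ 27/4*p := by
      rw [abs_of_nonneg (by positivity)]
      nlinarith only [hτ2, hp0.le]
    calc |3*a*p*τ^2| = |a*(3*p*τ^2)| := by rw [e1]
      _ ≤ C*(27/4*p) := absmul ha e2
      _ = 27/4*C*p := by ring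
  have h5b : |5*b*p^2*τ^4| ≤ 26*C*p^2 := by
    have e1 : (5:ℝ)*b*p^2*τ^4 = b*(5*p^2*τ^4) := by ring
    have e2 : |5*p^2*τ^4| ≤ 26*p^2 := by
      rw [abs_of_nonneg (by positivity)]
      nlinarith only [hτ4, sq_nonneg p]
    calc |5*b*p^2*τ^4| = |b*(5*p^2*τ^4)| := by rw [e1]
      _ ≤ C*(26*p^2) := absmul hb e2
      _ = 26*C*p^2 := by ring
  have hE2 : |E| ≤ |X| + 33*C*p := by
    have t1 := abs_add_le (X + 3*a*p*τ^2) (5*b*p^2*τ^4)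
    have t2 := abs_add_le X (3*a*p*τ^2)
    calc |E| ≤ |X + 3*a*p*τ^2| + |5*b*p^2*τ^4| := t1
      _ ≤ |X| + |3*a*p*τ^2| + |5*b*p^2*τ^4| := by linarith only [t2]
      _ ≤ |X| + 33*C*p := by linarith only [h3a, h5b, hCp, hCp0]
  set x := |X| with hxdef
  have hx0 : 0 ≤ x := abs_nonneg X
  have he0 : 0 ≤ |E| := abs_nonneg E
  have h5b' : |5*b*τ^4*p^2| ≤ 26*C*p^2 := by
    calc |5*b*τ^4*p^2| = |5*b*p^2*τ^4| := by ring_nf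
      _ ≤ 26*C*p^2 := h5b
  have hU : |X+5*b*τ^4*p^2| ≤ x + 26*C*p^2 :=
    le_trans (abs_add_le _ _) (by linarith only [h5b'])
  have h6a : |6*a*τ^2*p| ≤ 14*C*p := by
    have e1 : (6:ℝ)*a*τ^2*p = a*(6*τ^2*p) := by ring
    have e2 : |6*τ^2*p| ≤ 14*p := by
      rw [abs_of_nonneg (by positivity)]
      nlinarith only [hτ2, hp0.le]
    calc |6*a*τ^2*p| = |a*(6*τ^2*p)| := by rw [e1]
      _ ≤ C*(14*p) := absmul ha e2
      _ = 14*C*p := by ring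
  have hV : |X+6*a*τ^2*p+5*b*τ^4*p^2| ≤ x + 40*C*p := by
    have t1 := abs_add_le (X+6*a*τ^2*p) (5*b*τ^4*p^2)
    have t2 := abs_add_le X (6*a*τ^2*p)
    linarith only [t1, t2, h6a, h5b', hCp]
  have hP : |4*τ^5+4*τ^4+4*τ^3+4*τ^2+3*τ+1| ≤ 80 := by
    have hn : (0:ℝ) ≤ 4*τ^5+4*τ^4+4*τ^3+4*τ^2+3*τ+1 := by
      linarith only [pow_pos hτpos 5, pow_pos hτpos 4, pow_pos hτpos 3,
        pow_pos hτpos 2, hτpos]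
    rw [abs_of_nonneg hn]
    linarith only [hτ5, hτ4, hτ3, hτ2, hτr]
  have hnum : |τ^2*((X+5*b*τ^4*p^2)*(X+6*a*τ^2*p+5*b*τ^4*p^2))
         + 9*a^2*p^2*((τ-1)*(4*τ^5+4*τ^4+4*τ^3+4*τ^2+3*τ+1)/4)|
      ≤ 9/4*((x+26*C*p^2)*(x+40*C*p)) + 270*C^2*p^2*|E| := by
    refine le_trans (abs_add_le _ _) ?_
    have part1 : |τ^2*((X+5*b*τ^4*p^2)*(X+6*a*τ^2*p+5*b*τ^4*p^2))|
        ≤ 9/4*((x+26*C*p^2)*(x+40*C*p)) := by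
      have hτ2' : |τ^2| ≤ 9/4 := by rw [abs_of_nonneg (sq_nonneg τ)]; exact hτ2
      exact absmul hτ2' (absmul hU hV)
    have part2 : |9*a^2*p^2*((τ-1)*(4*τ^5+4*τ^4+4*τ^3+4*τ^2+3*τ+1)/4)|
        ≤ 270*C^2*p^2*|E| := by
      have e1 : 9*a^2*p^2*((τ-1)*(4*τ^5+4*τ^4+4*τ^3+4*τ^2+3*τ+1)/4)
          = (9*a^2*p^2/4)*((τ-1)*(4*τ^5+4*τ^4+4*τ^3+4*τ^2+3*τ+1)) := by ring
      have e2 : |9*a^2*p^2/4| ≤ 9*C^2*p^2/4 := by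
        rw [abs_of_nonneg (by positivity)]
        nlinarith only [ha2, sq_nonneg p]
      have e3 : |(τ-1)*(4*τ^5+4*τ^4+4*τ^3+4*τ^2+3*τ+1)| ≤ (3/2*|E|)*80 :=
        absmul habs hP
      calc |9*a^2*p^2*((τ-1)*(4*τ^5+4*τ^4+4*τ^3+4*τ^2+3*τ+1)/4)|
          = |(9*a^2*p^2/4)*((τ-1)*(4*τ^5+4*τ^4+4*τ^3+4*τ^2+3*τ+1))| := by rw [e1]
        _ ≤ (9*C^2*p^2/4)*((3/2*|E|)*80) := absmul e2 e3
        _ = 270*C^2*p^2*|E| := by ring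
    linarith only [part1, part2]
  have hA : |a*p*(2*τ+1) + b*p^2*(4*τ^3+3*τ^2+2*τ+1)| ≤ 29*C*p := by
    have pa : |a*p*(2*τ+1)| ≤ 4*C*p := by
      have e1 : a*p*(2*τ+1) = a*(p*(2*τ+1)) := by ring
      have e2 : |p*(2*τ+1)| ≤ 4*p := by
        rw [abs_of_nonneg (mul_nonneg hp0.le (by linarith))]
        linarith only [mul_nonneg hp0.le (by linarith : (0:ℝ) ≤ 3 - 2*τ)]
      calc |a*p*(2*τ+1)| = |a*(p*(2*τ+1))| := by rw [e1]
        _ ≤ C*(4*p) := absmul ha e2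
        _ = 4*C*p := by ring
    have pb : |b*p^2*(4*τ^3+3*τ^2+2*τ+1)| ≤ 25*C*p^2 := by
      have e1 : b*p^2*(4*τ^3+3*τ^2+2*τ+1) = b*(p^2*(4*τ^3+3*τ^2+2*τ+1)) := by ring
      have e2 : |p^2*(4*τ^3+3*τ^2+2*τ+1)| ≤ 25*p^2 := by
        have hn : (0:ℝ) ≤ 4*τ^3+3*τ^2+2*τ+1 := by
          linarith only [pow_pos hτpos 3, pow_pos hτpos 2, hτpos]
        rw [abs_of_nonneg (mul_nonneg (sq_nonneg p) hn)]
        have hle : 4*τ^3+3*τ^2+2*τ+1 ≤ 25 := by linarith only [hτ3, hτ2, hτr]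
        linarith only [mul_le_mul_of_nonneg_left hle (sq_nonneg p)]
      calc |b*p^2*(4*τ^3+3*τ^2+2*τ+1)| = |b*(p^2*(4*τ^3+3*τ^2+2*τ+1))| := by rw [e1]
        _ ≤ C*(25*p^2) := absmul hb e2
        _ = 25*C*p^2 := by ring
    have t1 := abs_add_le (a*p*(2*τ+1)) (b*p^2*(4*τ^3+3*τ^2+2*τ+1))
    linarith only [t1, pa, pb, hCpp]
  have hsq : (τ-1)^2 ≤ 9/4*|E|^2 := by
    nlinarith only [sq_abs (τ-1),
      mul_self_le_mul_self (abs_nonneg (τ-1)) habs]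
  -- the identities
  have hKey : (1/τ + τ + a*p*τ^3 + b*p^2*τ^5 + X*τ) - (2 + a*p + b*p^2 - 9*a^2*p^2/4 + X)
      = -((τ-1)^2 * (a*p*(2*τ+1) + b*p^2*(4*τ^3+3*τ^2+2*τ+1)))
        - ((τ-1)^2/τ^2 - 9*a^2*p^2/4) := by
    rw [hX']; field_simp; ring
  have hB : (τ-1)^2/τ^2 = E^2*τ^2/(τ+1)^2 := by
    field_simp
    linear_combination ((τ-1)*(τ+1) - E*τ^2) * h1
  have hBid : E^2*τ^2/(τ+1)^2 - 9*a^2*p^2/4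
      = (τ^2*((X+5*b*τ^4*p^2)*(X+6*a*τ^2*p+5*b*τ^4*p^2))
         + 9*a^2*p^2*((τ-1)*(4*τ^5+4*τ^4+4*τ^3+4*τ^2+3*τ+1)/4)) / (τ+1)^2 := by
    rw [hEdef]; field_simp; ring
  have hBabs : |E^2*τ^2/(τ+1)^2 - 9*a^2*p^2/4|
      ≤ (x+26*C*p^2)*(x+40*C*p) + 120*C^2*p^2*|E| := by
    rw [hBid, abs_div, abs_of_nonneg (sq_nonneg (τ+1))]
    have h9 : (9/4:ℝ) ≤ (τ+1)^2 := by
      linarith only [mul_nonneg (by linarith : (0:ℝ) ≤ τ - 1/2) (by linarith : (0:ℝ) ≤ τ + 5/2)]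
    have hd : |τ^2*((X+5*b*τ^4*p^2)*(X+6*a*τ^2*p+5*b*τ^4*p^2))
         + 9*a^2*p^2*((τ-1)*(4*τ^5+4*τ^4+4*τ^3+4*τ^2+3*τ+1)/4)| / (τ+1)^2
        ≤ |τ^2*((X+5*b*τ^4*p^2)*(X+6*a*τ^2*p+5*b*τ^4*p^2))
         + 9*a^2*p^2*((τ-1)*(4*τ^5+4*τ^4+4*τ^3+4*τ^2+3*τ+1)/4)| / (9/4) := by
      gcongr
    refine le_trans hd ?_
    rw [div_le_iff₀ (by norm_num : (0:ℝ) < 9/4)]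
    linarith only [hnum]
  have hD : |(1/τ + τ + a*p*τ^3 + b*p^2*τ^5 + X*τ) - (2 + a*p + b*p^2 - 9*a^2*p^2/4 + X)|
      ≤ 9/4*|E|^2*(29*C*p) + ((x+26*C*p^2)*(x+40*C*p) + 120*C^2*p^2*|E|) := by
    rw [hKey, hB]
    have e1 : -((τ-1)^2 * (a*p*(2*τ+1) + b*p^2*(4*τ^3+3*τ^2+2*τ+1)))
        - (E^2*τ^2/(τ+1)^2 - 9*a^2*p^2/4)
        = -(((τ-1)^2 * (a*p*(2*τ+1) + b*p^2*(4*τ^3+3*τ^2+2*τ+1)))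
          + (E^2*τ^2/(τ+1)^2 - 9*a^2*p^2/4)) := by ring
    rw [e1, abs_neg]
    refine le_trans (abs_add_le _ _) ?_
    have p1 : |(τ-1)^2 * (a*p*(2*τ+1) + b*p^2*(4*τ^3+3*τ^2+2*τ+1))|
        ≤ 9/4*|E|^2*(29*C*p) := by
      have h2 : |(τ-1)^2| ≤ 9/4*|E|^2 := by
        rw [abs_of_nonneg (sq_nonneg _)]; exact hsq
      exact absmul h2 hA
    linarith only [p1, hBabs]
  rw [show X^2 = x^2 from (sq_abs X).symm]
  exact le_trans hD (edge_arith C x p |E| hC hx0 hp0 hp1 he0 hE2)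

/-- Expansion of the spectral edge `L̃ = F(-τ)` where `τ` is the critical point of
`F(m) = -1/m - m - (a/q²)m³ - (b/q⁴)m⁵ - X·m` near `1`. -/
theorem edge_expansion (C : ℝ) (hC : 0 < C) :
    ∃ C'' : ℝ, 0 < C'' ∧ ∃ q₀ : ℝ, 0 < q₀ ∧
      ∀ a b X q τ : ℝ, |a| ≤ C → |b| ≤ C → |X| ≤ 1 / 2 → q₀ ≤ q →
        τ ∈ Set.Ioo (1 / 2 : ℝ) (3 / 2) →
        1 / τ ^ 2 - 1 - (3 * a / q ^ 2) * τ ^ 2 - (5 * b / q ^ 4) * τ ^ 4 - X = 0 →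
        |(1 / τ + τ + (a / q ^ 2) * τ ^ 3 + (b / q ^ 4) * τ ^ 5 + X * τ) -
          (2 + a / q ^ 2 + b / q ^ 4 - 9 * a ^ 2 / (4 * q ^ 4) + X)| ≤
          C'' * (|X| / q ^ 2 + X ^ 2 + 1 / q ^ 6) := by
  refine ⟨100000*(1+C)^3, by positivity, 1, one_pos, ?_⟩
  intro a b X q τ ha hb hX hq hτ heq
  have hq0 : (0:ℝ) < q := lt_of_lt_of_le one_pos hq
  have hq2 : (1:ℝ) ≤ q^2 := by
    calc (1:ℝ) = 1*1 := by norm_num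
      _ ≤ q*q := mul_le_mul hq hq zero_le_one hq0.le
      _ = q^2 := (sq q).symm
  have hp0 : (0:ℝ) < 1/q^2 := by positivity
  have hp1 : 1/q^2 ≤ 1 := by
    rw [div_le_one (by positivity)]; exact hq2
  have heq' : 1/τ^2 - 1 - 3*a*(1/q^2)*τ^2 - 5*b*(1/q^2)^2*τ^4 - X = 0 := by
    linear_combination heq
  have main := edge_main C hC a b X (1/q^2) τ ha hb hX hp0 hp1 hτ heq'
  have e2 : (1/τ + τ + (a/q^2)*τ^3 + (b/q^4)*τ^5 + X*τ)
      - (2 + a/q^2 + b/q^4 - 9*a^2/(4*q^4) + X)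
      = (1/τ + τ + a*(1/q^2)*τ^3 + b*(1/q^2)^2*τ^5 + X*τ)
        - (2 + a*(1/q^2) + b*(1/q^2)^2 - 9*a^2*(1/q^2)^2/4 + X) := by ring
  have e3 : |X| * (1/q^2) + X^2 + (1/q^2)^3 = |X|/q^2 + X^2 + 1/q^6 := by ring
  rw [e2, ← e3]
  exact main
end
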